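/- In the setting of the moment relaxation of the PSAA model (minimize $\langle f_N, y\rangle + \epsilon\|y\|$ with $\epsilon > 0$ over $y_0 = 1$, $M_{d_0}[y] \succeq 0$, $L_{g_i}^{(d_0)}[y] \succeq 0$): if the relaxation is tight, i.e., its optimal value equals the optimal value of the PSAA problem $\min \{f_N(\bar{x}) + \epsilon\|[\bar{x}]_{2d_0}\| : \bar{x} \in \Delta\}$, then any global minimizer $y^*$ of the relaxation satisfies $\mathrm{rank}\, M_{d_0}[y^*] = 1$. In fact, $y^* = [u^*]_{2d_0}$ for the minimizer $u^*$ of the PSAA problem, and $y^*$ is the unique minimizer of the relaxation. -/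

import Mathlib

noncomputable section

/-- Index set of monomial exponents of degree at most `d` in `n` variables. -/
def Idx (n d : ℕ) := {α : Fin n → Fin (d + 1) // ∑ i, (α i : ℕ) ≤ d}

instance (n d : ℕ) : Fintype (Idx n d) := by unfold Idx; infer_instance

/-- The moment matrix `M_d[y]`. -/
def momMat (n d : ℕ) (y : (Fin n → ℕ) → ℝ) : Matrix (Idx n d) (Idx n d) ℝ :=
  Matrix.of fun a b => y (fun i => (a.1 i : ℕ) + (b.1 i : ℕ))

/-- The monomial `u^α`. -/
def mono {n : ℕ} (u : Fin n → ℝ) (α : Fin n → ℕ) : ℝ := ∏ i, u i ^ α i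

/-- The localizing matrix of `g` with index degree at most `m`. -/
def locMat {n : ℕ} (g : MvPolynomial (Fin n) ℝ) (m : ℕ)
    (y : (Fin n → ℕ) → ℝ) : Matrix (Idx n m) (Idx n m) ℝ :=
  Matrix.of fun a b =>
    ∑ γ ∈ g.support, g.coeff γ * y (fun i => γ i + (a.1 i : ℕ) + (b.1 i : ℕ))

/-- The Riesz pairing `⟨f, y⟩ = ∑_α f_α y_α`. -/
def riesz {n : ℕ} (f : MvPolynomial (Fin n) ℝ) (y : (Fin n → ℕ) → ℝ) : ℝ :=
  ∑ γ ∈ f.support, f.coeff γ * y (fun i => γ i)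

/-- The Euclidean norm of the truncation of `y` to degree `d`. -/
def tmsNorm (n d : ℕ) (y : (Fin n → ℕ) → ℝ) : ℝ :=
  Real.sqrt (∑ a : Idx n d, (y (fun i => (a.1 i : ℕ))) ^ 2)

/-- Feasibility for the moment relaxation of the PSAA model over the simplex,
with constraints `g = (x₁, …, xₙ, 1 - eᵀx)`. -/
def Feas (n d0 : ℕ) (y : (Fin n → ℕ) → ℝ) : Prop :=
  y 0 = 1 ∧ (momMat n d0 y).PosSemidef ∧
  (∀ i : Fin n, (locMat (MvPolynomial.X i) (d0 - 1) y).PosSemidef) ∧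
  (locMat (1 - ∑ i : Fin n, MvPolynomial.X i) (d0 - 1) y).PosSemidef

/-!
The feasible set of the relaxation is convex and its objective is a linear form plus `ε` times
a Euclidean norm. If `y₁` is a minimizer and `y₂` is feasible with the same value, evaluating at
the midpoint gives `‖y₁ + y₂‖ ≥ ‖y₁‖ + ‖y₂‖` for the truncations, so by strict convexity of the
Euclidean norm they lie on a common ray; the normalization `y₀ = 1` then makes them equal.
Tightness says exactly that the Dirac sequence `[u*]_{2d₀}`, which is feasible, has the optimal
value, so `y*` agrees with it, and its moment matrix `[u*]_{d₀} [u*]_{d₀}ᵀ` has rank one.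
-/

open Matrix

theorem SameRay.eq_of_apply_eq {R M : Type*} [Field R] [LinearOrder R] [IsStrictOrderedRing R]
    [AddCommGroup M] [Module R M] {x y : M} (h : SameRay R x y) (f : M →ₗ[R] R)
    (hxy : f x = f y) (hx : f x ≠ 0) : x = y := by
  have hx₀ : x ≠ 0 := fun h₀ => hx (by simp [h₀])
  have hy₀ : y ≠ 0 := fun h₀ => hx (by simp [hxy, h₀])
  obtain ⟨r, s, hr, -, hrs⟩ := h.exists_pos hx₀ hy₀
  have hsr : s = r := by
    have := congrArg f hrs
    rw [map_smul, map_smul, ← hxy, smul_eq_mul, smul_eq_mul] at this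
    exact (mul_right_cancel₀ hx this).symm
  subst hsr
  exact smul_right_injective M hr.ne' hrs

theorem sameRay_of_isMin_add_norm {V E : Type*} [AddCommGroup V] [Module ℝ V]
    [NormedAddCommGroup E] [NormedSpace ℝ E] [StrictConvexSpace ℝ E] {S : Set V} (hS : Convex ℝ S)
    (L : V →ₗ[ℝ] ℝ) (T : V →ₗ[ℝ] E) {ε : ℝ} (hε : 0 < ε) {y₁ y₂ : V}
    (hy₁ : y₁ ∈ S) (hy₂ : y₂ ∈ S)
    (hmin : ∀ y ∈ S, L y₁ + ε * ‖T y₁‖ ≤ L y + ε * ‖T y‖)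
    (heq : L y₁ + ε * ‖T y₁‖ = L y₂ + ε * ‖T y₂‖) :
    SameRay ℝ (T y₁) (T y₂) := by
  have hmid := hmin _ (hS hy₁ hy₂ (by norm_num : (0 : ℝ) ≤ 2⁻¹) (by norm_num : (0 : ℝ) ≤ 2⁻¹)
    (by norm_num))
  simp only [map_add, map_smul, ← smul_add, norm_smul, smul_eq_mul,
    Real.norm_of_nonneg (by norm_num : (0 : ℝ) ≤ 2⁻¹)] at hmid
  refine sameRay_iff_norm_add.mpr (le_antisymm (norm_add_le _ _) ?_)
  nlinarith

theorem Matrix.rank_vecMulVec_eq_one {ι K : Type*} [Fintype ι] [Field K] {w v : ι → K}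
    (hw : w ≠ 0) (hv : v ≠ 0) : (vecMulVec w v).rank = 1 := by
  refine le_antisymm (rank_vecMulVec_le w v) (Nat.one_le_iff_ne_zero.mpr fun h => ?_)
  obtain ⟨i, hi⟩ := Function.ne_iff.mp hw
  obtain ⟨j, hj⟩ := Function.ne_iff.mp hv
  rw [rank_eq_finrank_span_cols, Submodule.finrank_eq_zero, Submodule.span_eq_bot] at h
  exact mul_ne_zero hi hj (congrFun (h _ ⟨j, rfl⟩) i)

def Idx.zero (n d : ℕ) : Idx n d := ⟨fun _ => ⟨0, d.succ_pos⟩, by simp⟩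

def Idx.ofExponent {n d : ℕ} (α : Fin n → ℕ) (hα : ∑ i, α i ≤ d) : Idx n d :=
  ⟨fun i => ⟨α i, Nat.lt_succ_of_le ((Finset.single_le_sum (fun j _ => (α j).zero_le)
    (Finset.mem_univ i)).trans hα)⟩, hα⟩

def truncate (n d : ℕ) : ((Fin n → ℕ) → ℝ) →ₗ[ℝ] EuclideanSpace ℝ (Idx n d) :=
  (WithLp.linearEquiv 2 ℝ (Idx n d → ℝ)).symm.toLinearMap ∘ₗ
    LinearMap.funLeft ℝ ℝ (fun a i => (a.1 i : ℕ))

theorem truncate_apply (n d : ℕ) (y : (Fin n → ℕ) → ℝ) (a : Idx n d) :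
    truncate n d y a = y (fun i => (a.1 i : ℕ)) := rfl

theorem tmsNorm_eq_norm_truncate (n d : ℕ) (y : (Fin n → ℕ) → ℝ) :
    tmsNorm n d y = ‖truncate n d y‖ := by
  simp [tmsNorm, EuclideanSpace.norm_eq, truncate_apply]

theorem apply_eq_of_truncate_eq {n d : ℕ} {y z : (Fin n → ℕ) → ℝ}
    (h : truncate n d y = truncate n d z) (α : Fin n → ℕ) (hα : ∑ i, α i ≤ d) : y α = z α :=
  congrArg (· (Idx.ofExponent α hα)) h

def rieszₗ {n : ℕ} (f : MvPolynomial (Fin n) ℝ) : ((Fin n → ℕ) → ℝ) →ₗ[ℝ] ℝ where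
  toFun := riesz f
  map_add' y z := by simp only [riesz, Pi.add_apply, mul_add, Finset.sum_add_distrib]
  map_smul' c y := by
    simp only [riesz, Pi.smul_apply, smul_eq_mul, RingHom.id_apply, Finset.mul_sum]
    exact Finset.sum_congr rfl fun _ _ => by ring

theorem momMat_add (n d : ℕ) (y z : (Fin n → ℕ) → ℝ) :
    momMat n d (y + z) = momMat n d y + momMat n d z := rfl

theorem momMat_smul (n d : ℕ) (c : ℝ) (y : (Fin n → ℕ) → ℝ) :
    momMat n d (c • y) = c • momMat n d y := rfl

theorem locMat_add {n : ℕ} (g : MvPolynomial (Fin n) ℝ) (m : ℕ) (y z : (Fin n → ℕ) → ℝ) :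
    locMat g m (y + z) = locMat g m y + locMat g m z := by
  ext a b
  simp only [locMat, of_apply, Matrix.add_apply, Pi.add_apply, mul_add, Finset.sum_add_distrib]

theorem locMat_smul {n : ℕ} (g : MvPolynomial (Fin n) ℝ) (m : ℕ) (c : ℝ) (y : (Fin n → ℕ) → ℝ) :
    locMat g m (c • y) = c • locMat g m y := by
  ext a b
  simp only [locMat, of_apply, Matrix.smul_apply, Pi.smul_apply, smul_eq_mul, Finset.mul_sum]
  exact Finset.sum_congr rfl fun _ _ => by ring

theorem convex_setOf_feas (n d0 : ℕ) : Convex ℝ {y | Feas n d0 y} := by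
  rintro y ⟨hy₀, hyM, hyX, hyS⟩ z ⟨hz₀, hzM, hzX, hzS⟩ a b ha hb hab
  refine ⟨by simp [hy₀, hz₀, hab], ?_, fun i => ?_, ?_⟩
  · rw [momMat_add, momMat_smul, momMat_smul]
    exact (hyM.smul ha).add (hzM.smul hb)
  · rw [locMat_add, locMat_smul, locMat_smul]
    exact ((hyX i).smul ha).add ((hzX i).smul hb)
  · rw [locMat_add, locMat_smul, locMat_smul]
    exact (hyS.smul ha).add (hzS.smul hb)

theorem eq_of_feas_of_isMin {n d0 d : ℕ} (f : MvPolynomial (Fin n) ℝ) {ε : ℝ} (hε : 0 < ε)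
    {y₁ y₂ : (Fin n → ℕ) → ℝ} (h₁ : Feas n d0 y₁) (h₂ : Feas n d0 y₂)
    (hmin : ∀ y, Feas n d0 y → riesz f y₁ + ε * tmsNorm n d y₁ ≤ riesz f y + ε * tmsNorm n d y)
    (heq : riesz f y₁ + ε * tmsNorm n d y₁ = riesz f y₂ + ε * tmsNorm n d y₂)
    (α : Fin n → ℕ) (hα : ∑ i, α i ≤ d) : y₁ α = y₂ α := by
  simp only [tmsNorm_eq_norm_truncate] at hmin heq
  have hray := sameRay_of_isMin_add_norm (convex_setOf_feas n d0) (rieszₗ f) (truncate n d) hε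
    h₁ h₂ hmin heq
  have hy₀ : ∀ y, Feas n d0 y → truncate n d y (Idx.zero n d) = 1 := fun y hy => hy.1
  refine apply_eq_of_truncate_eq (hray.eq_of_apply_eq
    (EuclideanSpace.proj (𝕜 := ℝ) (Idx.zero n d)).toLinearMap ?_ ?_) α hα
  · exact (hy₀ y₁ h₁).trans (hy₀ y₂ h₂).symm
  · exact fun h => one_ne_zero ((hy₀ y₁ h₁).symm.trans h)

theorem mono_add {n : ℕ} (u : Fin n → ℝ) (α β : Fin n → ℕ) :
    mono u (α + β) = mono u α * mono u β := by
  simp only [mono, Pi.add_apply, pow_add, Finset.prod_mul_distrib]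

/-- The vector `[u]_d`. -/
def monomialVec (n d : ℕ) (u : Fin n → ℝ) : Idx n d → ℝ := fun a => mono u fun i => a.1 i

theorem monomialVec_zero (n d : ℕ) (u : Fin n → ℝ) : monomialVec n d u (Idx.zero n d) = 1 := by
  simp [monomialVec, mono, Idx.zero]

theorem monomialVec_ne_zero (n d : ℕ) (u : Fin n → ℝ) : monomialVec n d u ≠ 0 :=
  Function.ne_iff.mpr ⟨Idx.zero n d, by simp [monomialVec_zero]⟩

theorem momMat_mono (n d : ℕ) (u : Fin n → ℝ) :
    momMat n d (mono u) = vecMulVec (monomialVec n d u) (monomialVec n d u) := by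
  ext a b
  exact mono_add u _ _

theorem locMat_mono {n : ℕ} (g : MvPolynomial (Fin n) ℝ) (m : ℕ) (u : Fin n → ℝ) :
    locMat g m (mono u) =
      MvPolynomial.eval u g • vecMulVec (monomialVec n m u) (monomialVec n m u) := by
  ext a b
  simp only [locMat, of_apply, Matrix.smul_apply, vecMulVec_apply, MvPolynomial.eval_eq',
    smul_eq_mul, Finset.sum_mul]
  refine Finset.sum_congr rfl fun γ _ => ?_
  rw [show (fun i => γ i + (a.1 i : ℕ) + (b.1 i : ℕ)) =
      (γ + fun i => (a.1 i : ℕ)) + fun i => (b.1 i : ℕ) from rfl, mono_add, mono_add]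
  simp only [mono, monomialVec]
  ring

theorem riesz_mono {n : ℕ} (f : MvPolynomial (Fin n) ℝ) (u : Fin n → ℝ) :
    riesz f (mono u) = MvPolynomial.eval u f := by
  rw [riesz, MvPolynomial.eval_eq']
  rfl

theorem feas_mono {n d0 : ℕ} {u : Fin n → ℝ} (hu₀ : ∀ i, 0 ≤ u i) (hu₁ : ∑ i, u i ≤ 1) :
    Feas n d0 (mono u) := by
  have hpsd : ∀ m, (vecMulVec (monomialVec n m u) (monomialVec n m u)).PosSemidef := fun m => by
    simpa using posSemidef_vecMulVec_self_star (monomialVec n m u)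
  refine ⟨by simp [mono], ?_, fun i => ?_, ?_⟩
  · rw [momMat_mono]
    exact hpsd d0
  · rw [locMat_mono]
    exact (hpsd _).smul (by simpa using hu₀ i)
  · rw [locMat_mono]
    exact (hpsd _).smul (by simpa using hu₁)

theorem momMat_congr {n d : ℕ} {y z : (Fin n → ℕ) → ℝ}
    (h : ∀ α : Fin n → ℕ, ∑ i, α i ≤ 2 * d → y α = z α) : momMat n d y = momMat n d z := by
  ext a b
  refine h _ ?_
  rw [Finset.sum_add_distrib, two_mul]
  exact add_le_add a.2 b.2

theorem stmt_10_general (n d0 : ℕ)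
    (fN : MvPolynomial (Fin n) ℝ)
    (ε : ℝ) (hε : 0 < ε)
    (ustar : Fin n → ℝ) (hustar : (∀ i, 0 ≤ ustar i) ∧ ∑ i, ustar i ≤ 1)
    (ystar : (Fin n → ℕ) → ℝ)
    (hfeas : Feas n d0 ystar)
    (hmin : ∀ y : (Fin n → ℕ) → ℝ, Feas n d0 y →
      riesz fN ystar + ε * tmsNorm n (2 * d0) ystar ≤
        riesz fN y + ε * tmsNorm n (2 * d0) y)
    (htight : riesz fN ystar + ε * tmsNorm n (2 * d0) ystar =
      MvPolynomial.eval ustar fN + ε * tmsNorm n (2 * d0) (fun α => mono ustar α)) :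
    (momMat n d0 ystar).rank = 1 ∧
    (∀ α : Fin n → ℕ, (∑ i, α i) ≤ 2 * d0 → ystar α = mono ustar α) ∧
    (∀ y : (Fin n → ℕ) → ℝ, Feas n d0 y →
      riesz fN y + ε * tmsNorm n (2 * d0) y =
        riesz fN ystar + ε * tmsNorm n (2 * d0) ystar →
      ∀ α : Fin n → ℕ, (∑ i, α i) ≤ 2 * d0 → y α = ystar α) := by
  have hdirac : ∀ α : Fin n → ℕ, ∑ i, α i ≤ 2 * d0 → ystar α = mono ustar α :=
    eq_of_feas_of_isMin fN hε hfeas (feas_mono hustar.1 hustar.2) hmin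
      (by rw [riesz_mono]; exact htight)
  refine ⟨?_, hdirac, fun y hy hval α hα =>
    (eq_of_feas_of_isMin fN hε hfeas hy hmin hval.symm α hα).symm⟩
  rw [momMat_congr hdirac, momMat_mono]
  exact rank_vecMulVec_eq_one (monomialVec_ne_zero n d0 ustar) (monomialVec_ne_zero n d0 ustar)

/-- converse direction of Theorem 3.2: if the moment relaxation
of the PSAA model is tight, then any minimizer `y*` of the relaxation has a
rank-one moment matrix; in fact `y* = [u*]_{2d₀}` for the PSAA minimizer `u*`,
and `y*` is the unique minimizer of the relaxation. -/
theorem stmt_10 (n d0 : ℕ) (hd0 : 1 ≤ d0)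
    (fN : MvPolynomial (Fin n) ℝ) (hdeg : fN.totalDegree ≤ 2 * d0)
    (ε : ℝ) (hε : 0 < ε)
    (ustar : Fin n → ℝ) (hustar : (∀ i, 0 ≤ ustar i) ∧ ∑ i, ustar i ≤ 1)
    (hustarmin : ∀ x : Fin n → ℝ, (∀ i, 0 ≤ x i) → ∑ i, x i ≤ 1 →
      MvPolynomial.eval ustar fN + ε * tmsNorm n (2 * d0) (fun α => mono ustar α) ≤
        MvPolynomial.eval x fN + ε * tmsNorm n (2 * d0) (fun α => mono x α))
    (ystar : (Fin n → ℕ) → ℝ)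
    (hfeas : Feas n d0 ystar)
    (hmin : ∀ y : (Fin n → ℕ) → ℝ, Feas n d0 y →
      riesz fN ystar + ε * tmsNorm n (2 * d0) ystar ≤
        riesz fN y + ε * tmsNorm n (2 * d0) y)
    (htight : riesz fN ystar + ε * tmsNorm n (2 * d0) ystar =
      MvPolynomial.eval ustar fN + ε * tmsNorm n (2 * d0) (fun α => mono ustar α)) :
    (momMat n d0 ystar).rank = 1 ∧
    (∀ α : Fin n → ℕ, (∑ i, α i) ≤ 2 * d0 → ystar α = mono ustar α) ∧
    (∀ y : (Fin n → ℕ) → ℝ, Feas n d0 y →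
      riesz fN y + ε * tmsNorm n (2 * d0) y =
        riesz fN ystar + ε * tmsNorm n (2 * d0) ystar →
      ∀ α : Fin n → ℕ, (∑ i, α i) ≤ 2 * d0 → y α = ystar α) :=
  stmt_10_general n d0 fN ε hε ustar hustar ystar hfeas hmin htight
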